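/- Let c, ρ′ ∈ ℝ, let n be a positive integer, let a : ℕ → ℂ, and let d, b : ℕ → ℕ be sequences of natural numbers with d(0) = 1, b(0) ≥ 1, and |a(k)| ≤ d(k) for all k ∈ ℕ. Assume that for every real t > 0 the series ∑_{k=0}^∞ d(k)·e^{−2πtk} and ∑_{k=0}^∞ b(k)·e^{−2πtk/n} converge, and that for all real t > 0: e^{2π(c/24)/t}·∑_{k=0}^∞ d(k)·e^{−2πk/t} = e^{2πt(c/24)}·∑_{k=0}^∞ d(k)·e^{−2πtk}, and e^{2π(c/24)/t}·∑_{k=0}^∞ a(k)·e^{−2πk/t} = e^{2πt(c/24−ρ′)}·∑_{k=0}^∞ b(k)·e^{−2πtk/n}. Then ρ′ ≥ 0, and if ρ′ = 0 then b(0) = 1. -/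

import Mathlib

/-!
Taking absolute values in the twisted identity and using `|a k| ≤ d k`, the untwisted identity
gives `∑ b k e^{-2πtk/n} ≤ e^{2πtρ'} ∑ d k e^{-2πtk}` for every `t > 0`. The left side is at
least `b 0 ≥ 1`, while `∑ d k e^{-2πtk} → d 0 = 1` as `t → ∞`. Hence `e^{2πtρ'}` cannot tend
to `0`, so `ρ' ≥ 0`, and for `ρ' = 0` the limit gives `b 0 ≤ 1`.
-/

open Real Filter Topology

theorem tendsto_tsum_mul_exp_neg_mul_atTop {f : ℕ → ℝ} {s₀ : ℝ}
    (hf : Summable fun k : ℕ => ‖f k‖ * exp (-s₀ * k)) :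
    Tendsto (fun s : ℝ => ∑' k : ℕ, f k * exp (-s * k)) atTop (𝓝 (f 0)) := by
  have hlim : ∀ k : ℕ, Tendsto (fun s : ℝ => f k * exp (-s * k)) atTop
      (𝓝 (if k = 0 then f 0 else 0)) := by
    rintro (_ | k)
    · simp
    · have hexp : Tendsto (fun s : ℝ => exp (-s * (k + 1 : ℕ))) atTop (𝓝 0) :=
        tendsto_exp_atBot.comp <| tendsto_neg_atTop_atBot.atBot_mul_const (by positivity)
      simpa using hexp.const_mul (f (k + 1))
  have hbound : ∀ᶠ s in atTop, ∀ k : ℕ, ‖f k * exp (-s * k)‖ ≤ ‖f k‖ * exp (-s₀ * k) := by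
    filter_upwards [eventually_ge_atTop s₀] with s hs k
    rw [norm_mul, norm_of_nonneg (exp_pos _).le]
    gcongr
  simpa using tendsto_tsum_of_dominated_convergence hf hlim hbound

theorem tsum_le_exp_mul_tsum_of_twisted_modular {c ρ' t : ℝ} {n : ℕ} {a : ℕ → ℂ} {d b : ℕ → ℕ}
    (had : ∀ k, ‖a k‖ ≤ (d k : ℝ))
    (hds : Summable fun k : ℕ => (d k : ℝ) * exp (-2 * π * k / t))
    (huntw : exp (2 * π * (c / 24) / t) * ∑' k : ℕ, (d k : ℝ) * exp (-2 * π * k / t) =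
      exp (2 * π * t * (c / 24)) * ∑' k : ℕ, (d k : ℝ) * exp (-2 * π * t * k))
    (htw : (exp (2 * π * (c / 24) / t) : ℂ) * ∑' k : ℕ, a k * (exp (-2 * π * k / t) : ℂ) =
      (exp (2 * π * t * (c / 24 - ρ')) : ℂ) *
        ((∑' k : ℕ, (b k : ℝ) * exp (-2 * π * t * k / n) : ℝ) : ℂ)) :
    ∑' k : ℕ, (b k : ℝ) * exp (-2 * π * t * k / n) ≤
      exp (2 * π * t * ρ') * ∑' k : ℕ, (d k : ℝ) * exp (-2 * π * t * k) := by
  have hA : ‖∑' k : ℕ, a k * (exp (-2 * π * k / t) : ℂ)‖ ≤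
      ∑' k : ℕ, (d k : ℝ) * exp (-2 * π * k / t) := by
    refine tsum_of_norm_bounded hds.hasSum fun k => ?_
    rw [norm_mul, Complex.norm_real, norm_of_nonneg (exp_pos _).le]
    gcongr
    exact had k
  have hB : 0 ≤ ∑' k : ℕ, (b k : ℝ) * exp (-2 * π * t * k / n) :=
    tsum_nonneg fun k => by positivity
  have hnorm := congrArg norm htw
  simp only [norm_mul, Complex.norm_real, norm_of_nonneg (exp_pos _).le, norm_of_nonneg hB]
    at hnorm
  refine le_of_mul_le_mul_left ?_ (exp_pos (2 * π * t * (c / 24 - ρ')))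
  calc exp (2 * π * t * (c / 24 - ρ')) * ∑' k : ℕ, (b k : ℝ) * exp (-2 * π * t * k / n)
      ≤ exp (2 * π * (c / 24) / t) * ∑' k : ℕ, (d k : ℝ) * exp (-2 * π * k / t) := by
        rw [← hnorm]; gcongr
    _ = exp (2 * π * t * (c / 24 - ρ')) *
          (exp (2 * π * t * ρ') * ∑' k : ℕ, (d k : ℝ) * exp (-2 * π * t * k)) := by
        rw [huntw, ← mul_assoc, ← exp_add]; ring_nf

theorem stmt_9_general (c ρ' : ℝ) (n : ℕ) (a : ℕ → ℂ) (d b : ℕ → ℕ)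
    (hd0 : d 0 = 1) (hb0 : 1 ≤ b 0)
    (had : ∀ k, ‖a k‖ ≤ (d k : ℝ))
    (hds : ∀ t : ℝ, 0 < t → Summable fun k : ℕ => (d k : ℝ) * Real.exp (-2 * π * t * k))
    (hbs : ∀ t : ℝ, 0 < t → Summable fun k : ℕ => (b k : ℝ) * Real.exp (-2 * π * t * k / n))
    (huntw : ∀ t : ℝ, 0 < t →
      Real.exp (2 * π * (c / 24) / t) *
          ∑' k : ℕ, (d k : ℝ) * Real.exp (-2 * π * k / t) =
        Real.exp (2 * π * t * (c / 24)) *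
          ∑' k : ℕ, (d k : ℝ) * Real.exp (-2 * π * t * k))
    (htw : ∀ t : ℝ, 0 < t →
      (Real.exp (2 * π * (c / 24) / t) : ℂ) *
          ∑' k : ℕ, a k * (Real.exp (-2 * π * k / t) : ℂ) =
        (Real.exp (2 * π * t * (c / 24 - ρ')) : ℂ) *
          ((∑' k : ℕ, (b k : ℝ) * Real.exp (-2 * π * t * k / n) : ℝ) : ℂ)) :
    0 ≤ ρ' ∧ (ρ' = 0 → b 0 = 1) := by
  have hD : Tendsto (fun t : ℝ => ∑' k : ℕ, (d k : ℝ) * exp (-2 * π * t * k)) atTop (𝓝 1) := by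
    have hsum : Summable fun k : ℕ => ‖(d k : ℝ)‖ * exp (-(2 * π) * k) :=
      (hds 1 one_pos).congr fun k => by rw [norm_natCast]; ring_nf
    have h := (tendsto_tsum_mul_exp_neg_mul_atTop hsum).comp
      (tendsto_id.const_mul_atTop (by positivity : (0 : ℝ) < 2 * π))
    simpa [hd0, Function.comp_def, mul_assoc] using h
  have hbound : ∀ᶠ t in atTop,
      (b 0 : ℝ) ≤ exp (2 * π * t * ρ') * ∑' k : ℕ, (d k : ℝ) * exp (-2 * π * t * k) := by
    filter_upwards [eventually_gt_atTop 0] with t ht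
    have hds' : Summable fun k : ℕ => (d k : ℝ) * exp (-2 * π * k / t) :=
      (hds t⁻¹ (inv_pos.2 ht)).congr fun k => by ring_nf
    calc (b 0 : ℝ) ≤ ∑' k : ℕ, (b k : ℝ) * exp (-2 * π * t * k / n) := by
          simpa using (hbs t ht).le_tsum 0 fun k _ => by positivity
      _ ≤ _ := tsum_le_exp_mul_tsum_of_twisted_modular had hds' (huntw t ht) (htw t ht)
  have hb0' : (1 : ℝ) ≤ b 0 := by exact_mod_cast hb0
  refine ⟨?_, ?_⟩
  · by_contra! hρ
    have hexp : Tendsto (fun t : ℝ => exp (2 * π * t * ρ')) atTop (𝓝 0) :=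
      tendsto_exp_atBot.comp <|
        (tendsto_id.const_mul_atTop (by positivity)).atTop_mul_const_of_neg hρ
    have := ge_of_tendsto (by simpa using hexp.mul hD) hbound
    linarith
  · rintro rfl
    have := ge_of_tendsto hD (by simpa using hbound)
    exact le_antisymm (by exact_mod_cast this) hb0

/-- Analytic core of the Main Result: with `d 0 = 1`, `b 0 ≥ 1`,
`|a k| ≤ d k`, and the untwisted and twisted modular-invariance identities
(with `λ = 1` and `ρ = 0`) on the imaginary axis, one has `ρ' ≥ 0`, and
`b 0 = 1` if `ρ' = 0`. -/
theorem stmt_9 (c ρ' : ℝ) (n : ℕ) (hn : 0 < n) (a : ℕ → ℂ) (d b : ℕ → ℕ)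
    (hd0 : d 0 = 1) (hb0 : 1 ≤ b 0)
    (had : ∀ k, ‖a k‖ ≤ (d k : ℝ))
    (hds : ∀ t : ℝ, 0 < t → Summable fun k : ℕ => (d k : ℝ) * Real.exp (-2 * π * t * k))
    (hbs : ∀ t : ℝ, 0 < t → Summable fun k : ℕ => (b k : ℝ) * Real.exp (-2 * π * t * k / n))
    (huntw : ∀ t : ℝ, 0 < t →
      Real.exp (2 * π * (c / 24) / t) *
          ∑' k : ℕ, (d k : ℝ) * Real.exp (-2 * π * k / t) =
        Real.exp (2 * π * t * (c / 24)) *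
          ∑' k : ℕ, (d k : ℝ) * Real.exp (-2 * π * t * k))
    (htw : ∀ t : ℝ, 0 < t →
      (Real.exp (2 * π * (c / 24) / t) : ℂ) *
          ∑' k : ℕ, a k * (Real.exp (-2 * π * k / t) : ℂ) =
        (Real.exp (2 * π * t * (c / 24 - ρ')) : ℂ) *
          ((∑' k : ℕ, (b k : ℝ) * Real.exp (-2 * π * t * k / n) : ℝ) : ℂ)) :
    0 ≤ ρ' ∧ (ρ' = 0 → b 0 = 1) :=
  stmt_9_general c ρ' n a d b hd0 hb0 had hds hbs huntw htw
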